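/- arXiv:1511.00649 — 2 statements merged into one kernel-verified Lean document; each statement's English description precedes it below -/
import Mathlib

section
/- Let A = (A1 A2) ∈ ℝ^{m×n} with A1 ∈ ℝ^{m×k} of full rank k. For weight matrices W = (W1 W2), with W1 having positive entries and W2 staying bounded, let (X̃1(W) X̃2(W)) be a minimizer of ‖((A1 A2) − (X1 X2)) ⊙ (W1 W2)‖_F² over (X1 X2) with rank(X1 X2) ≤ r, and set λ = min_{i,j}(W1)_{ij}. Then ‖P⊥_{X̃1(W)}(A2) − P⊥_{A1}(A2)‖_F = O(1/λ) as λ → ∞. -/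
/-!
Comparing the minimizer with the feasible competitor `(A1, 0)` gives
`λ ‖A1 - X̃1‖_F ≤ ‖(A1 - X̃1) ⊙ W1‖_F ≤ ‖A2 ⊙ W2‖_F ≤ ρ ‖A2‖_F`, so `X̃1` lies within `O(1/λ)` of
`A1`. As `A1ᵀ A1` is invertible, `B ↦ B (BᵀB)⁻¹ Bᵀ` is smooth, hence locally Lipschitz, at `A1`,
so the two projections, and with them `P⊥(A2)`, differ by `O(1/λ)`.
-/

open Matrix Filter Topology

noncomputable def frob {α β : Type*} [Fintype α] [Fintype β] (M : Matrix α β ℝ) : ℝ :=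
  Real.sqrt (∑ i, ∑ j, (M i j) ^ 2)

noncomputable def projCol {m k : ℕ} (B : Matrix (Fin m) (Fin k) ℝ) :
    Matrix (Fin m) (Fin m) ℝ :=
  B * (Bᵀ * B)⁻¹ * Bᵀ

section Frobenius

variable {α β γ : Type*} [Fintype α] [Fintype β] [Fintype γ]

attribute [local instance] Matrix.frobeniusNormedAddCommGroup Matrix.frobeniusNormedSpace

theorem frob_eq_norm (M : Matrix α β ℝ) : frob M = ‖M‖ := by
  simp only [frob, frobenius_norm_def, Real.norm_eq_abs, Real.rpow_two, sq_abs,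
    Real.sqrt_eq_rpow, one_div]

theorem frob_zero : frob (0 : Matrix α β ℝ) = 0 := by
  simp [frob_eq_norm]

theorem frob_nonneg (M : Matrix α β ℝ) : 0 ≤ frob M := Real.sqrt_nonneg _

theorem frob_sub_comm (M N : Matrix α β ℝ) : frob (M - N) = frob (N - M) := by
  simp only [frob_eq_norm, norm_sub_rev]

theorem frob_smul (c : ℝ) (M : Matrix α β ℝ) : frob (c • M) = |c| * frob M := by
  simp only [frob_eq_norm, norm_smul, Real.norm_eq_abs]

theorem frob_mul_le (M : Matrix α β ℝ) (N : Matrix β γ ℝ) : frob (M * N) ≤ frob M * frob N := by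
  simp only [frob_eq_norm]
  exact frobenius_norm_mul M N

theorem frob_le_frob_of_abs_le {M N : Matrix α β ℝ} (h : ∀ i j, |M i j| ≤ |N i j|) :
    frob M ≤ frob N :=
  Real.sqrt_le_sqrt <| Finset.sum_le_sum fun i _ => Finset.sum_le_sum fun j _ =>
    sq_le_sq.2 (h i j)

theorem abs_apply_le_frob (M : Matrix α β ℝ) (i : α) (j : β) : |M i j| ≤ frob M := by
  rw [← Real.sqrt_sq_eq_abs]
  refine Real.sqrt_le_sqrt (le_trans ?_ (Finset.single_le_sum (f := fun i => ∑ j, M i j ^ 2)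
    (fun i _ => Finset.sum_nonneg fun j _ => sq_nonneg (M i j)) (Finset.mem_univ i)))
  exact Finset.single_le_sum (fun j _ => sq_nonneg (M i j)) (Finset.mem_univ j)

theorem frob_le_sqrt_card_mul_of_abs_le {M : Matrix α β ℝ} {c : ℝ} (hc : 0 ≤ c)
    (h : ∀ i j, |M i j| ≤ c) :
    frob M ≤ √(Fintype.card α * Fintype.card β) * c := by
  calc frob M ≤ frob (of fun _ _ => c : Matrix α β ℝ) :=
        frob_le_frob_of_abs_le fun i j => (h i j).trans (le_abs_self c)
    _ = √(Fintype.card α * Fintype.card β) * c := by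
        simp [frob, Real.sqrt_sq hc, Finset.card_univ, mul_assoc]

theorem frob_hadamard_le {M W : Matrix α β ℝ} {ρ : ℝ} (hρ : 0 ≤ ρ) (hW : ∀ i j, |W i j| ≤ ρ) :
    frob (M ⊙ W) ≤ ρ * frob M := by
  rw [← abs_of_nonneg hρ, ← frob_smul]
  refine frob_le_frob_of_abs_le fun i j => ?_
  rw [hadamard_apply, Matrix.smul_apply, smul_eq_mul, abs_mul, abs_mul, mul_comm |ρ|]
  exact mul_le_mul_of_nonneg_left ((hW i j).trans (le_abs_self ρ)) (abs_nonneg _)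

theorem mul_frob_le_frob_hadamard {M W : Matrix α β ℝ} {c : ℝ} (hc : 0 ≤ c)
    (hW : ∀ i j, c ≤ |W i j|) : c * frob M ≤ frob (M ⊙ W) := by
  rw [← abs_of_nonneg hc, ← frob_smul]
  refine frob_le_frob_of_abs_le fun i j => ?_
  rw [hadamard_apply, Matrix.smul_apply, smul_eq_mul, abs_mul, abs_mul, mul_comm |c|,
    abs_of_nonneg hc]
  exact mul_le_mul_of_nonneg_left (hW i j) (abs_nonneg _)

end Frobenius

section Smoothness

-- The entrywise sup norm makes `Matrix ι κ 𝕜` the Pi type `ι → κ → 𝕜`, so smoothness is entrywise.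
attribute [local instance] Matrix.normedAddCommGroup Matrix.normedSpace

variable {𝕜 : Type*} [NontriviallyNormedField 𝕜] {E : Type*} [NormedAddCommGroup E]
  [NormedSpace 𝕜 E] {n : WithTop ℕ∞} {x : E} {ι κ ν : Type*} [Fintype ι] [Fintype κ] [Fintype ν]

theorem contDiffAt_matrix_iff {f : E → Matrix ι κ 𝕜} :
    ContDiffAt 𝕜 n f x ↔ ∀ i j, ContDiffAt 𝕜 n (fun y => f y i j) x :=
  contDiffAt_pi.trans (forall_congr' fun _ => contDiffAt_pi)

theorem ContDiffAt.matrix_apply {f : E → Matrix ι κ 𝕜} (hf : ContDiffAt 𝕜 n f x) (i : ι) (j : κ) :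
    ContDiffAt 𝕜 n (fun y => f y i j) x :=
  contDiffAt_matrix_iff.1 hf i j

theorem ContDiffAt.matrix_transpose {f : E → Matrix ι κ 𝕜} (hf : ContDiffAt 𝕜 n f x) :
    ContDiffAt 𝕜 n (fun y => (f y)ᵀ) x :=
  contDiffAt_matrix_iff.2 fun i j => hf.matrix_apply j i

theorem ContDiffAt.matrix_mul {f : E → Matrix ι κ 𝕜} {g : E → Matrix κ ν 𝕜}
    (hf : ContDiffAt 𝕜 n f x) (hg : ContDiffAt 𝕜 n g x) :
    ContDiffAt 𝕜 n (fun y => f y * g y) x :=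
  contDiffAt_matrix_iff.2 fun i j => by
    simp only [mul_apply]
    exact ContDiffAt.sum fun l _ => (hf.matrix_apply i l).mul (hg.matrix_apply l j)

theorem ContDiffAt.matrix_det [DecidableEq ι] {f : E → Matrix ι ι 𝕜} (hf : ContDiffAt 𝕜 n f x) :
    ContDiffAt 𝕜 n (fun y => (f y).det) x := by
  simp only [det_apply']
  exact ContDiffAt.sum fun σ _ =>
    contDiffAt_const.mul (contDiffAt_prod fun i _ => hf.matrix_apply (σ i) i)

theorem ContDiffAt.matrix_adjugate [DecidableEq ι] {f : E → Matrix ι ι 𝕜}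
    (hf : ContDiffAt 𝕜 n f x) : ContDiffAt 𝕜 n (fun y => (f y).adjugate) x := by
  refine contDiffAt_matrix_iff.2 fun i j => ?_
  simp only [adjugate_apply]
  refine ContDiffAt.matrix_det (contDiffAt_matrix_iff.2 fun s t => ?_)
  simp only [updateRow_apply]
  split_ifs
  · exact contDiffAt_const
  · exact hf.matrix_apply s t

theorem ContDiffAt.matrix_inv [DecidableEq ι] {f : E → Matrix ι ι 𝕜} (hf : ContDiffAt 𝕜 n f x)
    (hdet : (f x).det ≠ 0) : ContDiffAt 𝕜 n (fun y => (f y)⁻¹) x := by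
  simp only [inv_def, Ring.inverse_eq_inv']
  exact (hf.matrix_det.inv hdet).smul hf.matrix_adjugate

theorem contDiffAt_projCol {m k : ℕ} {A : Matrix (Fin m) (Fin k) ℝ} (hA : (Aᵀ * A).det ≠ 0) :
    ContDiffAt ℝ n projCol A := by
  have hid : ContDiffAt ℝ n (fun B : Matrix (Fin m) (Fin k) ℝ => B) A := contDiffAt_id
  exact (hid.matrix_mul (hid.matrix_transpose.matrix_mul hid |>.matrix_inv hA)).matrix_mul
    hid.matrix_transpose

theorem norm_le_frob (M : Matrix ι κ ℝ) : ‖M‖ ≤ frob M :=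
  (norm_le_iff (frob_nonneg M)).2 fun i j => abs_apply_le_frob M i j

theorem frob_le_sqrt_card_mul_norm (M : Matrix ι κ ℝ) :
    frob M ≤ √(Fintype.card ι * Fintype.card κ) * ‖M‖ :=
  frob_le_sqrt_card_mul_of_abs_le (norm_nonneg M) fun _ _ => norm_entry_le_entrywise_sup_norm M

theorem ContDiffAt.exists_frob_lipschitz {α β γ δ : Type*} [Fintype α] [Fintype β] [Fintype γ]
    [Fintype δ] {f : Matrix α β ℝ → Matrix γ δ ℝ} {A : Matrix α β ℝ} (hf : ContDiffAt ℝ 1 f A) :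
    ∃ K ≥ 0, ∃ ε > 0, ∀ B, frob (B - A) ≤ ε → frob (f B - f A) ≤ K * frob (B - A) := by
  obtain ⟨K, t, ht, hlip⟩ := hf.exists_lipschitzOnWith
  obtain ⟨ε, hε, hball⟩ := Metric.nhds_basis_closedBall.mem_iff.1 ht
  refine ⟨√(Fintype.card γ * Fintype.card δ) * K, by positivity, ε, hε, fun B hB => ?_⟩
  have hBA : ‖B - A‖ ≤ frob (B - A) := norm_le_frob _
  have hB : B ∈ t := hball (by rw [Metric.mem_closedBall, dist_eq_norm]; exact hBA.trans hB)
  have hA : A ∈ t := hball (Metric.mem_closedBall_self hε.le)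
  calc frob (f B - f A) ≤ √(Fintype.card γ * Fintype.card δ) * ‖f B - f A‖ :=
        frob_le_sqrt_card_mul_norm _
    _ ≤ √(Fintype.card γ * Fintype.card δ) * (K * ‖B - A‖) := by
        gcongr
        simpa only [dist_eq_norm] using hlip.dist_le_mul B hB A hA
    _ ≤ √(Fintype.card γ * Fintype.card δ) * K * frob (B - A) := by
        rw [mul_assoc]; gcongr

end Smoothness

theorem Matrix.isUnit_of_rank_eq_card {n K : Type*} [Fintype n] [DecidableEq n] [Field K]
    {A : Matrix n n K} (h : A.rank = Fintype.card n) : IsUnit A := by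
  rw [← mulVec_surjective_iff_isUnit]
  have hrange : LinearMap.range A.mulVecLin = ⊤ :=
    Submodule.eq_top_of_finrank_eq (by rw [Module.finrank_fintype_fun_eq_card]; exact h)
  exact LinearMap.range_eq_top.1 hrange

theorem Matrix.det_transpose_mul_self_ne_zero {m n R : Type*} [Fintype m] [Fintype n]
    [DecidableEq n] [Field R] [LinearOrder R] [IsStrictOrderedRing R] {A : Matrix m n R}
    (hA : A.rank = Fintype.card n) : (Aᵀ * A).det ≠ 0 := by
  refine ((isUnit_iff_isUnit_det _).1 (isUnit_of_rank_eq_card ?_)).ne_zero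
  rw [rank_transpose_mul_self, hA]

theorem Matrix.rank_fromCols_zero_le {R α β γ : Type*} [CommRing R] [StrongRankCondition R]
    [Fintype β] [DecidableEq β] [Fintype γ] (A : Matrix α β R) :
    (fromCols A (0 : Matrix α γ R)).rank ≤ A.rank := by
  simpa [mul_fromCols] using rank_mul_le_left A (fromCols (1 : Matrix β β R) (0 : Matrix β γ R))

theorem mul_frob_sub_le_of_weighted_cost_le {α κ ν : Type*} [Fintype α] [Fintype κ] [Fintype ν]
    {A1 X1 W1 : Matrix α κ ℝ} {A2 X2 W2 : Matrix α ν ℝ} {lam ρ : ℝ} (hlam : 0 ≤ lam)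
    (hW1 : ∀ i j, lam ≤ |W1 i j|) (hρ : 0 ≤ ρ) (hW2 : ∀ i j, |W2 i j| ≤ ρ)
    (hcost : frob ((A1 - X1) ⊙ W1) ^ 2 + frob ((A2 - X2) ⊙ W2) ^ 2 ≤ frob (A2 ⊙ W2) ^ 2) :
    lam * frob (A1 - X1) ≤ ρ * frob A2 :=
  calc lam * frob (A1 - X1) ≤ frob ((A1 - X1) ⊙ W1) := mul_frob_le_frob_hadamard hlam hW1
    _ ≤ frob (A2 ⊙ W2) := by
        refine (pow_le_pow_iff_left₀ (frob_nonneg _) (frob_nonneg _) two_ne_zero).1 ?_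
        linarith [sq_nonneg (frob ((A2 - X2) ⊙ W2))]
    _ ≤ ρ * frob A2 := frob_hadamard_le hρ hW2

theorem stmt_7_general {m k l : ℕ}
    (A1 : Matrix (Fin m) (Fin k) ℝ) (A2 : Matrix (Fin m) (Fin l) ℝ)
    (r : ℕ) (hrank : A1.rank = k) (hkr : k ≤ r)
    (ρ : ℝ) (hρ : 0 < ρ) :
    ∃ C > (0 : ℝ), ∃ lam0 > (0 : ℝ),
      ∀ (W1 : Matrix (Fin m) (Fin k) ℝ) (W2 : Matrix (Fin m) (Fin l) ℝ) (lam : ℝ)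
        (X1 : Matrix (Fin m) (Fin k) ℝ) (X2 : Matrix (Fin m) (Fin l) ℝ),
        (∀ i j, 0 < W1 i j) → (∀ i j, |W2 i j| ≤ ρ) →
        (∀ i j, lam ≤ W1 i j) → (∃ i j, W1 i j = lam) → lam0 ≤ lam →
        ((Matrix.fromCols X1 X2).rank ≤ r ∧
          ∀ (Y1 : Matrix (Fin m) (Fin k) ℝ) (Y2 : Matrix (Fin m) (Fin l) ℝ),
            (Matrix.fromCols Y1 Y2).rank ≤ r →
            frob (Matrix.hadamard (A1 - X1) W1) ^ 2 +
                frob (Matrix.hadamard (A2 - X2) W2) ^ 2 ≤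
              frob (Matrix.hadamard (A1 - Y1) W1) ^ 2 +
                frob (Matrix.hadamard (A2 - Y2) W2) ^ 2) →
        frob ((1 - projCol X1) * A2 - (1 - projCol A1) * A2) ≤ C / lam := by
  have hdet : (A1ᵀ * A1).det ≠ 0 :=
    det_transpose_mul_self_ne_zero (hrank.trans (Fintype.card_fin k).symm)
  obtain ⟨K, hK, ε, hε, hlip⟩ := (contDiffAt_projCol (n := 1) hdet).exists_frob_lipschitz
  set D := ρ * frob A2
  have hD : 0 ≤ D := mul_nonneg hρ.le (frob_nonneg A2)
  have hKD : 0 ≤ K * D * frob A2 := mul_nonneg (mul_nonneg hK hD) (frob_nonneg A2)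
  refine ⟨K * D * frob A2 + 1, by linarith, (D + 1) / ε, div_pos (by linarith) hε, ?_⟩
  intro W1 W2 lam X1 X2 _ hW2 hW1 _ hlam ⟨_, hmin⟩
  have hlam_pos : 0 < lam := (div_pos (by linarith) hε).trans_le hlam
  have hcompetitor : (fromCols A1 (0 : Matrix (Fin m) (Fin l) ℝ)).rank ≤ r :=
    (rank_fromCols_zero_le A1).trans (hrank.le.trans hkr)
  have hX1 : frob (X1 - A1) ≤ D / lam := by
    rw [frob_sub_comm, le_div_iff₀ hlam_pos, mul_comm]
    refine mul_frob_sub_le_of_weighted_cost_le (X2 := X2) hlam_pos.le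
      (fun i j => (hW1 i j).trans (le_abs_self _)) hρ.le hW2 ?_
    simpa [frob_zero] using hmin A1 0 hcompetitor
  have hX1_near : D / lam ≤ ε := by
    rw [div_le_iff₀ hlam_pos]
    rw [div_le_iff₀ hε] at hlam
    linarith [mul_comm lam ε]
  calc frob ((1 - projCol X1) * A2 - (1 - projCol A1) * A2)
      = frob ((projCol A1 - projCol X1) * A2) := by
        simp only [Matrix.sub_mul, Matrix.one_mul, sub_sub_sub_cancel_left]
    _ ≤ frob (projCol X1 - projCol A1) * frob A2 := by
        rw [frob_sub_comm]
        exact frob_mul_le _ _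
    _ ≤ K * (D / lam) * frob A2 := by
        refine mul_le_mul_of_nonneg_right ?_ (frob_nonneg _)
        exact (hlip X1 (hX1.trans hX1_near)).trans (mul_le_mul_of_nonneg_left hX1 hK)
    _ ≤ (K * D * frob A2 + 1) / lam := by
        rw [le_div_iff₀ hlam_pos]
        field_simp
        linarith

/-- **Lemma 3.6 (iii).** For minimizers of the weighted low rank problem with `W1` positive
and `W2` bounded (by `ρ`), `‖P⊥_{X̃1(W)}(A2) − P⊥_{A1}(A2)‖_F = O(1/λ)` as
`λ = min_{i,j}(W1)_{ij} → ∞`: there are `C > 0` and `λ0 > 0` such that `λ ≥ λ0` implies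
`‖P⊥_{X̃1(W)}(A2) − P⊥_{A1}(A2)‖_F ≤ C/λ`. -/
theorem stmt_7 {m k l : ℕ}
    (A1 : Matrix (Fin m) (Fin k) ℝ) (A2 : Matrix (Fin m) (Fin l) ℝ)
    (r : ℕ) (hrank : A1.rank = k) (hkr : k ≤ r) (hrmn : r ≤ min m (k + l))
    (ρ : ℝ) (hρ : 0 < ρ) :
    ∃ C > (0 : ℝ), ∃ lam0 > (0 : ℝ),
      ∀ (W1 : Matrix (Fin m) (Fin k) ℝ) (W2 : Matrix (Fin m) (Fin l) ℝ) (lam : ℝ)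
        (X1 : Matrix (Fin m) (Fin k) ℝ) (X2 : Matrix (Fin m) (Fin l) ℝ),
        (∀ i j, 0 < W1 i j) → (∀ i j, |W2 i j| ≤ ρ) →
        (∀ i j, lam ≤ W1 i j) → (∃ i j, W1 i j = lam) → lam0 ≤ lam →
        ((Matrix.fromCols X1 X2).rank ≤ r ∧
          ∀ (Y1 : Matrix (Fin m) (Fin k) ℝ) (Y2 : Matrix (Fin m) (Fin l) ℝ),
            (Matrix.fromCols Y1 Y2).rank ≤ r →
            frob (Matrix.hadamard (A1 - X1) W1) ^ 2 +
                frob (Matrix.hadamard (A2 - X2) W2) ^ 2 ≤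
              frob (Matrix.hadamard (A1 - Y1) W1) ^ 2 +
                frob (Matrix.hadamard (A2 - Y2) W2) ^ 2) →
        frob ((1 - projCol X1) * A2 - (1 - projCol A1) * A2) ≤ C / lam :=
  stmt_7_general A1 A2 r hrank hkr ρ hρ
end

section
/- Under the setup of the alternating minimization for F(X1, C, B, D) = ‖(A1 − X1) ⊙ W1‖_F² + ‖A2 − X1C − BD‖_F² (sequences (X1)_p, C_p, B_p, D_p satisfying the first-order stationarity equations of the update rules, m_p = F((X1)_p, C_p, B_p, D_p)), one has for all p: m_p − m_{p+1} ≥ (1/2)‖B_{p+1}D_{p+1} − B_pD_p‖_F². -/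
open Matrix Filter Topology

section aux

variable {α β γ : Type*} [Fintype α] [Fintype β] [Fintype γ]

noncomputable def inp (M N : Matrix α β ℝ) : ℝ := ∑ i, ∑ j, M i j * N i j

lemma frob_sq (M : Matrix α β ℝ) : frob M ^ 2 = inp M M := by
  rw [frob, Real.sq_sqrt (by positivity)]
  simp [inp, pow_two]

lemma inp_self_nonneg (M : Matrix α β ℝ) : 0 ≤ inp M M := by
  apply Finset.sum_nonneg; intro i _
  apply Finset.sum_nonneg; intro j _
  exact mul_self_nonneg _

lemma inp_eq_trace (M N : Matrix α β ℝ) : inp M N = Matrix.trace (Mᵀ * N) := by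
  simp only [inp, Matrix.trace, Matrix.diag, Matrix.mul_apply, Matrix.transpose_apply]
  rw [Finset.sum_comm]

lemma inp_comm (M N : Matrix α β ℝ) : inp M N = inp N M := by
  simp [inp, mul_comm]

lemma inp_expand (M N : Matrix α β ℝ) :
    inp (M + N) (M + N) = inp M M + 2 * inp M N + inp N N := by
  simp only [inp, Matrix.add_apply]
  rw [Finset.mul_sum, ← Finset.sum_add_distrib, ← Finset.sum_add_distrib]
  apply Finset.sum_congr rfl; intro i _
  rw [Finset.mul_sum, ← Finset.sum_add_distrib, ← Finset.sum_add_distrib]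
  apply Finset.sum_congr rfl; intro j _
  ring

/-- Orthogonality step: if the new residual is orthogonal to the change, the norm drops
by exactly the norm of the change. -/
lemma inp_step (R R' : Matrix α β ℝ) (h : inp R' (R - R') = 0) :
    inp R R = inp R' R' + inp (R - R') (R - R') := by
  have := inp_expand R' (R - R')
  simp only [h] at this
  simpa [add_sub_cancel] using this

lemma inp_mul_left_zero (X : Matrix α γ ℝ) (R : Matrix α β ℝ) (Y : Matrix γ β ℝ)
    (h : Xᵀ * R = 0) : inp R (X * Y) = 0 := by
  rw [inp_eq_trace, ← Matrix.mul_assoc, Matrix.trace_mul_comm]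
  have h2 : Rᵀ * X = 0 := by
    have := congrArg Matrix.transpose h
    simpa [Matrix.transpose_mul] using this
  rw [h2]
  simp

lemma inp_mul_right_zero (R : Matrix α β ℝ) (Y : Matrix α γ ℝ) (Dm : Matrix γ β ℝ)
    (h : R * Dmᵀ = 0) : inp R (Y * Dm) = 0 := by
  rw [inp_eq_trace, Matrix.trace_mul_comm, Matrix.mul_assoc]
  have h2 : Dm * Rᵀ = 0 := by
    have := congrArg Matrix.transpose h
    simpa [Matrix.transpose_mul] using this
  rw [h2]
  simp

lemma inp_transfer (R : Matrix α γ ℝ) (Cm : Matrix β γ ℝ) (Δ : Matrix α β ℝ) :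
    inp (R * Cmᵀ) Δ = inp R (Δ * Cm) := by
  simp only [inp, Matrix.mul_apply, Matrix.transpose_apply, Finset.sum_mul, Finset.mul_sum]
  apply Finset.sum_congr rfl; intro i _
  rw [Finset.sum_comm]
  apply Finset.sum_congr rfl; intro j _
  apply Finset.sum_congr rfl; intro t _
  ring

lemma inp_hadamard_transfer (P Q W : Matrix α β ℝ) :
    inp (Matrix.hadamard P W) (Matrix.hadamard Q W) =
      inp (Matrix.hadamard (Matrix.hadamard P W) W) Q := by
  simp only [inp, Matrix.hadamard_apply]
  apply Finset.sum_congr rfl; intro i _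
  apply Finset.sum_congr rfl; intro j _
  ring

lemma parallelogram_half (a b : Matrix α β ℝ) :
    (1 / 2) * inp (a + b) (a + b) ≤ inp a a + inp b b := by
  have h1 := inp_expand a b
  have h2 := inp_expand a (-b)
  have hnn := inp_self_nonneg (a + -b)
  have hb : inp (-b) (-b) = inp b b := by simp [inp]
  have hab : inp a (-b) = - inp a b := by
    simp [inp, Finset.sum_neg_distrib]
  nlinarith [inp_self_nonneg (a + b)]

end aux

/-- **Corollary 4.2 (i).** `m_p − m_{p+1} ≥ (1/2)‖B_{p+1}D_{p+1} − B_pD_p‖_F²` for all `p`. -/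
theorem stmt_13
    {m k l s : ℕ}
    (A1 : Matrix (Fin m) (Fin k) ℝ) (A2 : Matrix (Fin m) (Fin l) ℝ)
    (W1 : Matrix (Fin m) (Fin k) ℝ) (hW1 : ∀ i j, 0 < W1 i j)
    (X1 : ℕ → Matrix (Fin m) (Fin k) ℝ) (C : ℕ → Matrix (Fin k) (Fin l) ℝ)
    (B : ℕ → Matrix (Fin m) (Fin s) ℝ) (D : ℕ → Matrix (Fin s) (Fin l) ℝ)
    (mseq : ℕ → ℝ)
    (hm : ∀ p, mseq p = frob (Matrix.hadamard (A1 - X1 p) W1) ^ 2 +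
      frob (A2 - X1 p * C p - B p * D p) ^ 2)
    (heq1 : ∀ p, Matrix.hadamard (Matrix.hadamard (X1 (p + 1) - A1) W1) W1 =
      (A2 - X1 (p + 1) * C p - B p * D p) * (C p)ᵀ)
    (heq2 : ∀ p, (X1 (p + 1))ᵀ * (A2 - X1 (p + 1) * C (p + 1) - B p * D p) = 0)
    (heq3 : ∀ p, (A2 - X1 (p + 1) * C (p + 1) - B (p + 1) * D p) * (D p)ᵀ = 0)
    (heq4 : ∀ p, (B (p + 1))ᵀ * (A2 - X1 (p + 1) * C (p + 1) - B (p + 1) * D (p + 1)) = 0)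
    :
    ∀ p, (1 / 2) * frob (B (p + 1) * D (p + 1) - B p * D p) ^ 2 ≤ mseq p - mseq (p + 1) := by
  intro p
  set G0 : Matrix (Fin m) (Fin k) ℝ := Matrix.hadamard (A1 - X1 p) W1 with hG0def
  set G1 : Matrix (Fin m) (Fin k) ℝ := Matrix.hadamard (A1 - X1 (p + 1)) W1 with hG1def
  set S : Matrix (Fin m) (Fin k) ℝ := X1 (p + 1) - X1 p with hSdef
  set R0 : Matrix (Fin m) (Fin l) ℝ := A2 - X1 p * C p - B p * D p with hR0def
  set R1 : Matrix (Fin m) (Fin l) ℝ := A2 - X1 (p + 1) * C p - B p * D p with hR1def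
  set R2 : Matrix (Fin m) (Fin l) ℝ := A2 - X1 (p + 1) * C (p + 1) - B p * D p with hR2def
  set R3 : Matrix (Fin m) (Fin l) ℝ := A2 - X1 (p + 1) * C (p + 1) - B (p + 1) * D p with hR3def
  set R4 : Matrix (Fin m) (Fin l) ℝ :=
    A2 - X1 (p + 1) * C (p + 1) - B (p + 1) * D (p + 1) with hR4def
  -- Step 1 : update of X1 (together with the weighted term)
  have hG0 : G0 = G1 + Matrix.hadamard S W1 := by
    rw [hG0def, hG1def, hSdef]
    ext i j
    simp [Matrix.hadamard_apply, Matrix.sub_apply, Matrix.add_apply]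
    ring
  have hR0 : R0 = R1 + S * C p := by
    rw [hR0def, hR1def, hSdef, Matrix.sub_mul]
    abel
  have hcross : inp G1 (Matrix.hadamard S W1) = - inp R1 (S * C p) := by
    have h1 : inp G1 (Matrix.hadamard S W1) =
        inp (Matrix.hadamard (Matrix.hadamard (A1 - X1 (p + 1)) W1) W1) S :=
      inp_hadamard_transfer _ _ _
    have hneg : Matrix.hadamard (Matrix.hadamard (A1 - X1 (p + 1)) W1) W1 =
        -(R1 * (C p)ᵀ) := by
      rw [← heq1 p]
      ext i j
      simp [Matrix.hadamard_apply, Matrix.sub_apply]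
      ring
    have h2 : inp (-(R1 * (C p)ᵀ)) S = -(inp (R1 * (C p)ᵀ) S) := by
      simp [inp]
    rw [h1, hneg, h2, inp_transfer]
  have step1 : inp G0 G0 + inp R0 R0 = inp G1 G1 + inp R1 R1 +
      inp (Matrix.hadamard S W1) (Matrix.hadamard S W1) + inp (S * C p) (S * C p) := by
    rw [hG0, hR0, inp_expand, inp_expand, hcross]
    ring
  -- Step 2 : update of C
  have h12 : inp R1 R1 = inp R2 R2 + inp (R1 - R2) (R1 - R2) := by
    apply inp_step
    have hd : R1 - R2 = X1 (p + 1) * (C (p + 1) - C p) := by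
      rw [hR1def, hR2def, Matrix.mul_sub]; abel
    rw [hd]
    exact inp_mul_left_zero _ _ _ (heq2 p)
  -- Step 3 : update of B
  have h23 : inp R2 R2 = inp R3 R3 + inp (R2 - R3) (R2 - R3) := by
    apply inp_step
    have hd : R2 - R3 = (B (p + 1) - B p) * D p := by
      rw [hR2def, hR3def, Matrix.sub_mul]; abel
    rw [hd]
    exact inp_mul_right_zero _ _ _ (heq3 p)
  -- Step 4 : update of D
  have h34 : inp R3 R3 = inp R4 R4 + inp (R3 - R4) (R3 - R4) := by
    apply inp_step
    have hd : R3 - R4 = B (p + 1) * (D (p + 1) - D p) := by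
      rw [hR3def, hR4def, Matrix.mul_sub]; abel
    rw [hd]
    exact inp_mul_left_zero _ _ _ (heq4 p)
  -- The target matrix is the sum of the last two increments
  have hT : B (p + 1) * D (p + 1) - B p * D p = (R2 - R3) + (R3 - R4) := by
    rw [hR2def, hR3def, hR4def]; abel
  have hpar := parallelogram_half (R2 - R3) (R3 - R4)
  rw [← hT] at hpar
  -- Assemble
  have hmp : mseq p = inp G0 G0 + inp R0 R0 := by
    rw [hm p, frob_sq, frob_sq]
  have hmp1 : mseq (p + 1) = inp G1 G1 + inp R4 R4 := by
    rw [hm (p + 1), frob_sq, frob_sq]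
  rw [frob_sq, hmp, hmp1]
  have n1 := inp_self_nonneg (Matrix.hadamard S W1)
  have n2 := inp_self_nonneg (S * C p)
  have n3 := inp_self_nonneg (R1 - R2)
  linarith
end
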